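/- arXiv:2512.18770 — 7 statements merged into one kernel-verified Lean document; each statement's English description precedes it below -/
import Mathlib

section
/- Let s ∈ (0,1) and define Φ : (0,∞) × (0,∞) → ℝ by Φ(y,t) = (y^{2s} / (2^{2s} Γ(s))) · e^{−y²/(4t)} · t^{−(1+s)}. Then for all y > 0 and t > 0, ((1−2s)/y) · ∂_y Φ(y,t) + ∂_{yy} Φ(y,t) − ∂_t Φ(y,t) = 0, where ∂_y, ∂_{yy} denote the first and second partial derivatives in y and ∂_t the partial derivative in t. -/
open MeasureTheory Real Set Filter

/-- The profile `Φ(y,t) = (y^{2s}/(2^{2s}Γ(s))) e^{-y²/(4t)} t^{-(1+s)}`. -/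
noncomputable def extProfile (s y t : ℝ) : ℝ :=
  (y ^ (2 * s) / (2 ^ (2 * s) * Real.Gamma s)) * Real.exp (-(y ^ 2) / (4 * t)) * t ^ (-(1 + s))

open Topology

/-!
Each partial derivative of Φ is Φ times a rational function of `y` and `t`: `∂_y Φ = Φ L` and
`∂_t Φ = Φ M` with `L = 2s/y - y/(2t)` and `M = y²/(4t²) - (1+s)/t`, and then
`∂_{yy} Φ = Φ (L² + ∂_y L)`.
The equation becomes the rational identity `((1-2s)/y) L + L² + ∂_y L - M = 0`.
-/

theorem hasDerivAt_deriv_of_eventually_hasDerivAt_mul {𝕜 : Type*} [NontriviallyNormedField 𝕜]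
    {f L : 𝕜 → 𝕜} {x L' : 𝕜} (hf : ∀ᶠ z in 𝓝 x, HasDerivAt f (f z * L z) z)
    (hL : HasDerivAt L L' x) : HasDerivAt (deriv f) (f x * (L x ^ 2 + L')) x := by
  have hderiv : (fun z => f z * L z) =ᶠ[𝓝 x] deriv f := hf.mono fun z hz => hz.deriv.symm
  refine (((hf.self_of_nhds).mul hL).congr_of_eventuallyEq hderiv.symm).congr_deriv ?_
  ring

theorem hasDerivAt_extProfile_fst (s : ℝ) {y : ℝ} (t : ℝ) (hy : 0 < y) :
    HasDerivAt (fun y' => extProfile s y' t) (extProfile s y t * (2 * s / y - y / (2 * t))) y := by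
  have hpow := (Real.hasDerivAt_rpow_const (p := 2 * s) (Or.inl hy.ne')).div_const
    (2 ^ (2 * s) * Real.Gamma s)
  have hexponent : HasDerivAt (fun y' : ℝ => -(y' ^ 2) / (4 * t)) (-(2 * y) / (4 * t)) y := by
    simpa using ((hasDerivAt_pow 2 y).neg).div_const (4 * t)
  refine ((hpow.mul hexponent.exp).mul_const (t ^ (-(1 + s)))).congr_deriv ?_
  rw [extProfile, Real.rpow_sub_one hy.ne']
  field_simp
  ring

theorem hasDerivAt_extProfile_snd (s y : ℝ) {t : ℝ} (ht : 0 < t) :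
    HasDerivAt (fun t' => extProfile s y t')
      (extProfile s y t * (y ^ 2 / (4 * t ^ 2) - (1 + s) / t)) t := by
  have hexponent : HasDerivAt (fun t' : ℝ => -(y ^ 2) / (4 * t')) (y ^ 2 / (4 * t ^ 2)) t := by
    refine (((hasDerivAt_inv ht.ne').const_mul (-(y ^ 2) / 4)).congr_deriv ?_).congr_of_eventuallyEq
      (Eventually.of_forall fun z => ?_)
    · ring
    · ring
  have hpow := Real.hasDerivAt_rpow_const (p := -(1 + s)) (Or.inl ht.ne')
  refine ((hexponent.exp.const_mul (y ^ (2 * s) / (2 ^ (2 * s) * Real.Gamma s))).mul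
    hpow).congr_deriv ?_
  rw [extProfile, Real.rpow_sub_one ht.ne']
  field_simp
  ring

theorem hasDerivAt_deriv_extProfile_fst (s : ℝ) {y : ℝ} (t : ℝ) (hy : 0 < y) :
    HasDerivAt (deriv fun y' => extProfile s y' t)
      (extProfile s y t *
        ((2 * s / y - y / (2 * t)) ^ 2 + (-(2 * s) / y ^ 2 - 1 / (2 * t)))) y := by
  have hL : HasDerivAt (fun y' : ℝ => 2 * s / y' - y' / (2 * t))
      (-(2 * s) / y ^ 2 - 1 / (2 * t)) y := by
    refine ((((hasDerivAt_inv hy.ne').const_mul (2 * s)).sub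
      ((hasDerivAt_id y).div_const (2 * t))).congr_deriv ?_).congr_of_eventuallyEq
      (Eventually.of_forall fun z => ?_)
    · ring
    · simp only [Pi.sub_apply, id]
      ring
  refine hasDerivAt_deriv_of_eventually_hasDerivAt_mul ?_ hL
  filter_upwards [eventually_gt_nhds hy] with y' hy' using hasDerivAt_extProfile_fst s t hy'

theorem stmt_4_general (s : ℝ) (y t : ℝ) (hy : 0 < y) (ht : 0 < t) :
    ((1 - 2 * s) / y) * deriv (fun y' => extProfile s y' t) y
      + deriv (fun y' => deriv (fun y'' => extProfile s y'' t) y') y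
      - deriv (fun t' => extProfile s y t') t = 0 := by
  rw [(hasDerivAt_extProfile_fst s t hy).deriv, (hasDerivAt_deriv_extProfile_fst s t hy).deriv,
    (hasDerivAt_extProfile_snd s y ht).deriv]
  have hrational : (1 - 2 * s) / y * (2 * s / y - y / (2 * t))
      + ((2 * s / y - y / (2 * t)) ^ 2 + (-(2 * s) / y ^ 2 - 1 / (2 * t)))
      - (y ^ 2 / (4 * t ^ 2) - (1 + s) / t) = 0 := by
    field_simp
    ring
  linear_combination extProfile s y t * hrational

/-- The key scalar identity: `Φ` solves the degenerate extension-type equation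
`((1-2s)/y) ∂_y Φ + ∂_{yy} Φ - ∂_t Φ = 0` on `(0,∞)×(0,∞)`. -/
theorem stmt_4 (s : ℝ) (hs : s ∈ Set.Ioo (0 : ℝ) 1) (y t : ℝ) (hy : 0 < y) (ht : 0 < t) :
    ((1 - 2 * s) / y) * deriv (fun y' => extProfile s y' t) y
      + deriv (fun y' => deriv (fun y'' => extProfile s y'' t) y') y
      - deriv (fun t' => extProfile s y t') t = 0 :=
  stmt_4_general s y t hy ht
end

section
/- Let L ∈ ℝ, C ≥ 0, and let B : (0,∞) → ℝ be measurable with |B(t) − L·t| ≤ C·t² for all t ∈ (0,1] and |B(t)| ≤ C for all t ≥ 1. Then for each s ∈ (0,1) the function t ↦ B(t)·t^{−(1+s)} is integrable on (0,∞), and (1−s) · ∫₀^∞ B(t) t^{−(1+s)} dt → L as s → 1⁻ (i.e., the limit along s in (0,1) tending to 1 from below is L). This is the Abelian limit underlying the convergence of the fractional Laplacian to the Laplacian as s → 1⁻. -/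
/-!
On `(0,1]` write `B t = L * t + R t` with `|R t| ≤ C t²`. Splitting at `t = 1`,
`∫₀^∞ B t t^{-(1+s)} dt = L / (1 - s) + ∫₀¹ R t t^{-(1+s)} dt + ∫₁^∞ B t t^{-(1+s)} dt`,
and the last two integrals are bounded by `C / (2 - s)` and `C / s`, which stay bounded as
`s → 1`; the factor `1 - s` kills them.
-/

open MeasureTheory Real Set Filter Topology

lemma integrableOn_Ioc_zero_one_rpow {r : ℝ} (hr : -1 < r) :
    IntegrableOn (fun t : ℝ => t ^ r) (Ioc 0 1) :=
  (intervalIntegrable_iff_integrableOn_Ioc_of_le zero_le_one).1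
    (intervalIntegral.intervalIntegrable_rpow' hr)

lemma setIntegral_Ioc_zero_one_rpow {r : ℝ} (hr : -1 < r) :
    ∫ t in Ioc (0 : ℝ) 1, t ^ r = (r + 1)⁻¹ := by
  rw [← intervalIntegral.integral_of_le zero_le_one, integral_rpow (Or.inl hr), one_rpow,
    zero_rpow (by linarith), sub_zero, one_div]

lemma setIntegral_Ioi_one_rpow {r : ℝ} (hr : r < -1) :
    ∫ t in Ioi (1 : ℝ), t ^ r = -(r + 1)⁻¹ := by
  rw [integral_Ioi_rpow_of_lt hr one_pos, one_rpow, neg_div, one_div]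

lemma abs_mul_rpow_le {x t K a r : ℝ} (ht : 0 < t) (hx : |x| ≤ K * t ^ a) :
    |x * t ^ r| ≤ K * t ^ (a + r) := by
  rw [abs_mul, abs_of_pos (rpow_pos_of_pos ht r), rpow_add ht, ← mul_assoc]
  exact mul_le_mul_of_nonneg_right hx (rpow_pos_of_pos ht r).le

section WeightedBound

variable {f : ℝ → ℝ} {S : Set ℝ} {K a r : ℝ}

lemma integrableOn_mul_rpow_of_abs_le (hf : Measurable f) (hS : MeasurableSet S)
    (hS₀ : S ⊆ Ioi 0) (hbound : ∀ t ∈ S, |f t| ≤ K * t ^ a)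
    (hint : IntegrableOn (fun t => t ^ (a + r)) S) :
    IntegrableOn (fun t => f t * t ^ r) S :=
  Integrable.mono' (hint.const_mul K) (hf.mul (measurable_id.pow_const r)).aestronglyMeasurable <|
    (ae_restrict_iff' hS).2 <| .of_forall fun t ht => abs_mul_rpow_le (hS₀ ht) (hbound t ht)

lemma abs_setIntegral_mul_rpow_le (hS : MeasurableSet S) (hS₀ : S ⊆ Ioi 0)
    (hbound : ∀ t ∈ S, |f t| ≤ K * t ^ a) (hint : IntegrableOn (fun t => t ^ (a + r)) S) :
    |∫ t in S, f t * t ^ r| ≤ K * ∫ t in S, t ^ (a + r) := by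
  rw [← integral_const_mul]
  exact norm_integral_le_of_norm_le (f := fun t => f t * t ^ r) (hint.const_mul K) <|
    (ae_restrict_iff' hS).2 <| .of_forall fun t ht => abs_mul_rpow_le (hS₀ ht) (hbound t ht)

end WeightedBound

lemma mul_rpow_eq_sub_mul_rpow_add {t : ℝ} (ht : 0 < t) (x L s : ℝ) :
    x * t ^ (-(1 + s)) = (x - L * t) * t ^ (-(1 + s)) + L * t ^ (-s) := by
  have : t * t ^ (-(1 + s)) = t ^ (-s) := by
    rw [show -s = 1 + -(1 + s) by ring, rpow_add ht, rpow_one]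
  rw [← this]; ring

section AbelLimit

variable {L C s : ℝ} {B : ℝ → ℝ}

lemma integrableOn_Ioc_sub_mul_rpow (hB : Measurable B)
    (h1 : ∀ t ∈ Ioc (0 : ℝ) 1, |B t - L * t| ≤ C * t ^ 2) (hs : s < 2) :
    IntegrableOn (fun t => (B t - L * t) * t ^ (-(1 + s))) (Ioc 0 1) :=
  integrableOn_mul_rpow_of_abs_le (a := 2) (hB.sub (measurable_const.mul measurable_id))
    measurableSet_Ioc (fun _ ht => ht.1) (fun t ht => by rw [rpow_two]; exact h1 t ht)
    (integrableOn_Ioc_zero_one_rpow (by linarith))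

lemma abs_setIntegral_Ioc_sub_mul_rpow_le
    (h1 : ∀ t ∈ Ioc (0 : ℝ) 1, |B t - L * t| ≤ C * t ^ 2) (hs : s < 2) :
    |∫ t in Ioc 0 1, (B t - L * t) * t ^ (-(1 + s))| ≤ C / (2 - s) := by
  have hr : -1 < 2 + -(1 + s) := by linarith
  have := abs_setIntegral_mul_rpow_le (f := fun t => B t - L * t) (a := 2) measurableSet_Ioc
    (fun _ ht => ht.1) (fun t ht => by rw [rpow_two]; exact h1 t ht)
    (integrableOn_Ioc_zero_one_rpow hr)
  rwa [setIntegral_Ioc_zero_one_rpow hr, show 2 + -(1 + s) + 1 = 2 - s by ring] at this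

lemma integrableOn_Ioi_one_mul_rpow (hB : Measurable B) (h2 : ∀ t : ℝ, 1 ≤ t → |B t| ≤ C)
    (hs : 0 < s) : IntegrableOn (fun t => B t * t ^ (-(1 + s))) (Ioi 1) :=
  integrableOn_mul_rpow_of_abs_le (a := 0) hB measurableSet_Ioi
    (Ioi_subset_Ioi zero_le_one) (fun t ht => by rw [rpow_zero, mul_one]; exact h2 t ht.le)
    (integrableOn_Ioi_rpow_of_lt (by linarith) one_pos)

lemma abs_setIntegral_Ioi_one_mul_rpow_le (h2 : ∀ t : ℝ, 1 ≤ t → |B t| ≤ C) (hs : 0 < s) :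
    |∫ t in Ioi 1, B t * t ^ (-(1 + s))| ≤ C / s := by
  have hr : 0 + -(1 + s) < -1 := by linarith
  have := abs_setIntegral_mul_rpow_le (f := B) (a := 0) measurableSet_Ioi
    (Ioi_subset_Ioi zero_le_one) (fun t ht => by rw [rpow_zero, mul_one]; exact h2 t ht.le)
    (integrableOn_Ioi_rpow_of_lt hr one_pos)
  rwa [setIntegral_Ioi_one_rpow hr, show 0 + -(1 + s) + 1 = -s by ring, inv_neg, neg_neg,
    ← div_eq_mul_inv] at this

lemma integrableOn_Ioc_mul_rpow (hB : Measurable B)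
    (h1 : ∀ t ∈ Ioc (0 : ℝ) 1, |B t - L * t| ≤ C * t ^ 2) (hs : s < 1) :
    IntegrableOn (fun t => B t * t ^ (-(1 + s))) (Ioc 0 1) :=
  ((integrableOn_Ioc_sub_mul_rpow hB h1 (by linarith)).add
    ((integrableOn_Ioc_zero_one_rpow (by linarith)).const_mul L)).congr_fun
    (fun t ht => (mul_rpow_eq_sub_mul_rpow_add ht.1 (B t) L s).symm) measurableSet_Ioc

lemma setIntegral_Ioc_mul_rpow (hB : Measurable B)
    (h1 : ∀ t ∈ Ioc (0 : ℝ) 1, |B t - L * t| ≤ C * t ^ 2) (hs : s < 1) :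
    ∫ t in Ioc 0 1, B t * t ^ (-(1 + s)) =
      (∫ t in Ioc 0 1, (B t - L * t) * t ^ (-(1 + s))) + L / (1 - s) := by
  have hr : -1 < -s := by linarith
  rw [setIntegral_congr_fun measurableSet_Ioc
      (fun t ht => mul_rpow_eq_sub_mul_rpow_add ht.1 (B t) L s),
    integral_add (integrableOn_Ioc_sub_mul_rpow hB h1 (by linarith))
      ((integrableOn_Ioc_zero_one_rpow hr).const_mul L),
    integral_const_mul, setIntegral_Ioc_zero_one_rpow hr, neg_add_eq_sub, div_eq_mul_inv]

variable (hB : Measurable B) (h1 : ∀ t ∈ Ioc (0 : ℝ) 1, |B t - L * t| ≤ C * t ^ 2)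
  (h2 : ∀ t : ℝ, 1 ≤ t → |B t| ≤ C)
include hB h1 h2

lemma integrableOn_Ioi_zero_mul_rpow (hs : s ∈ Ioo 0 1) :
    IntegrableOn (fun t => B t * t ^ (-(1 + s))) (Ioi 0) := by
  rw [← Ioc_union_Ioi_eq_Ioi zero_le_one]
  exact (integrableOn_Ioc_mul_rpow hB h1 hs.2).union (integrableOn_Ioi_one_mul_rpow hB h2 hs.1)

lemma abs_one_sub_mul_setIntegral_sub_le (hs : s ∈ Ioo 0 1) :
    |(1 - s) * (∫ t in Ioi 0, B t * t ^ (-(1 + s))) - L| ≤ (1 - s) * (C / (2 - s) + C / s) := by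
  obtain ⟨hs0, hs1⟩ := hs
  set R := ∫ t in Ioc 0 1, (B t - L * t) * t ^ (-(1 + s))
  set T := ∫ t in Ioi 1, B t * t ^ (-(1 + s))
  have hsplit : ∫ t in Ioi 0, B t * t ^ (-(1 + s)) = R + L / (1 - s) + T := by
    rw [← Ioc_union_Ioi_eq_Ioi zero_le_one, setIntegral_union (Ioc_disjoint_Ioi le_rfl)
      measurableSet_Ioi (integrableOn_Ioc_mul_rpow hB h1 hs1)
      (integrableOn_Ioi_one_mul_rpow hB h2 hs0), setIntegral_Ioc_mul_rpow hB h1 hs1]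
  have hR := abs_setIntegral_Ioc_sub_mul_rpow_le h1 (by linarith : s < 2)
  have hT := abs_setIntegral_Ioi_one_mul_rpow_le h2 hs0
  calc |(1 - s) * (∫ t in Ioi 0, B t * t ^ (-(1 + s))) - L|
      = (1 - s) * |R + T| := by
        rw [hsplit, ← abs_of_pos (sub_pos.2 hs1), ← abs_mul, abs_of_pos (sub_pos.2 hs1)]
        congr 1; field_simp; ring
    _ ≤ (1 - s) * (C / (2 - s) + C / s) :=
        mul_le_mul_of_nonneg_left ((abs_add_le R T).trans (add_le_add hR hT)) (by linarith)

end AbelLimit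

theorem stmt_8_general (L C : ℝ) (B : ℝ → ℝ) (hB : Measurable B)
    (h1 : ∀ t ∈ Set.Ioc (0 : ℝ) 1, |B t - L * t| ≤ C * t ^ 2)
    (h2 : ∀ t : ℝ, 1 ≤ t → |B t| ≤ C) :
    (∀ s ∈ Set.Ioo (0 : ℝ) 1,
      IntegrableOn (fun t : ℝ => B t * t ^ (-(1 + s))) (Set.Ioi (0 : ℝ)) volume) ∧
    Filter.Tendsto
      (fun s : ℝ => (1 - s) * ∫ t in Set.Ioi (0 : ℝ), B t * t ^ (-(1 + s)))
      (nhdsWithin 1 (Set.Ioo (0 : ℝ) 1)) (nhds L) := by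
  refine ⟨fun s hs => integrableOn_Ioi_zero_mul_rpow hB h1 h2 hs, ?_⟩
  have hbound : Tendsto (fun s : ℝ => (1 - s) * (C / (2 - s) + C / s)) (𝓝[Ioo 0 1] 1) (𝓝 0) := by
    have : ContinuousAt (fun s : ℝ => (1 - s) * (C / (2 - s) + C / s)) 1 := by
      fun_prop (disch := norm_num)
    simpa using this.tendsto.mono_left nhdsWithin_le_nhds
  rw [tendsto_iff_norm_sub_tendsto_zero]
  exact squeeze_zero' (.of_forall fun _ => norm_nonneg _)
    (eventually_nhdsWithin_of_forall fun s hs => abs_one_sub_mul_setIntegral_sub_le hB h1 h2 hs)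
    hbound

/-- Abelian limit as `s → 1⁻`: if `|B(t) - L t| ≤ C t²` for `t ∈ (0,1]` and `|B(t)| ≤ C`
for `t ≥ 1`, then `t ↦ B(t) t^{-(1+s)}` is integrable on `(0,∞)` for each `s ∈ (0,1)`, and
`(1-s) ∫₀^∞ B(t) t^{-(1+s)} dt → L` as `s → 1⁻`. -/
theorem stmt_8 (L C : ℝ) (hC : 0 ≤ C) (B : ℝ → ℝ) (hB : Measurable B)
    (h1 : ∀ t ∈ Set.Ioc (0 : ℝ) 1, |B t - L * t| ≤ C * t ^ 2)
    (h2 : ∀ t : ℝ, 1 ≤ t → |B t| ≤ C) :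
    (∀ s ∈ Set.Ioo (0 : ℝ) 1,
      IntegrableOn (fun t : ℝ => B t * t ^ (-(1 + s))) (Set.Ioi (0 : ℝ)) volume) ∧
    Filter.Tendsto
      (fun s : ℝ => (1 - s) * ∫ t in Set.Ioi (0 : ℝ), B t * t ^ (-(1 + s)))
      (nhdsWithin 1 (Set.Ioo (0 : ℝ) 1)) (nhds L) :=
  stmt_8_general L C B hB h1 h2
end

section
/- Let L ∈ ℝ, C ≥ 0, and let B : (0,∞) → ℝ be measurable with |B(t)| ≤ C·t for all t ∈ (0,1], |B(t)| ≤ C for all t ≥ 1, and B(t) → L as t → ∞. Then for each s ∈ (0,1) the function t ↦ B(t)·t^{−(1+s)} is integrable on (0,∞), and s · ∫₀^∞ B(t) t^{−(1+s)} dt → L as s → 0⁺ (i.e., the limit along s in (0,1) tending to 0 from above is L). This is the Abelian limit underlying the convergence of the fractional Laplacian to the projection u − ū as s → 0⁺. -/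
/-!
The substitution `t = x ^ (-1/s)` turns `s * ∫₀^∞ B(t) t^(-(1+s)) dt` into `∫₀^∞ B(x ^ (-1/s)) dx`.
As `s → 0⁺`, `x ^ (-1/s)` tends to `∞` for `x < 1` and to `0⁺` for `x > 1`, so the integrand tends
to `L` on `(0,1)` and to `0` on `(1,∞)`. For `s ≤ 1/2` it is dominated by the integrable function
`C * min 1 (x ^ (-2))`, and dominated convergence gives the limit `L`.
-/

open MeasureTheory Real Set Filter Topology

lemma integrableOn_Ioi_min_one_rpow {p : ℝ} (hp : p < -1) :
    IntegrableOn (fun x : ℝ => min 1 (x ^ p)) (Ioi 0) := by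
  have hmeas : AEStronglyMeasurable (fun x : ℝ => min 1 (x ^ p)) :=
    (measurable_const.min (measurable_id.pow_const p)).aestronglyMeasurable
  rw [← Ioc_union_Ioi_eq_Ioi zero_le_one]
  refine IntegrableOn.union ?_ ?_
  · refine (integrableOn_const (C := (1 : ℝ)) measure_Ioc_lt_top.ne).mono' hmeas.restrict ?_
    filter_upwards [ae_restrict_mem measurableSet_Ioc] with x hx
    rw [norm_of_nonneg (le_min zero_le_one (rpow_nonneg hx.1.le p))]
    exact min_le_left _ _
  · refine (integrableOn_Ioi_rpow_of_lt hp one_pos).mono' hmeas.restrict ?_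
    filter_upwards [ae_restrict_mem measurableSet_Ioi] with x hx
    have hxp : 0 ≤ x ^ p := rpow_nonneg (zero_le_one.trans hx.le) p
    rw [norm_of_nonneg (le_min zero_le_one hxp)]
    exact min_le_right _ _

lemma min_one_rpow_le_min_one_rpow {x p q : ℝ} (hx : 0 < x) (hpq : p ≤ q) (hq : q ≤ 0) :
    min 1 (x ^ p) ≤ min 1 (x ^ q) := by
  rcases le_total 1 x with h | h
  · exact min_le_min_left _ (rpow_le_rpow_of_exponent_le h hpq)
  · rw [min_eq_left (one_le_rpow_of_pos_of_le_one_of_nonpos hx h (hpq.trans hq)),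
      min_eq_left (one_le_rpow_of_pos_of_le_one_of_nonpos hx h hq)]

lemma rpow_neg_inv_jacobian {s x : ℝ} (hs : 0 < s) (hx : 0 < x) :
    |-s⁻¹| * x ^ (-s⁻¹ - 1) * (x ^ (-s⁻¹)) ^ (-(1 + s)) = s⁻¹ := by
  have hexp : -s⁻¹ - 1 + -s⁻¹ * -(1 + s) = 0 := by field_simp; ring
  rw [abs_neg, abs_of_pos (inv_pos.2 hs), ← rpow_mul hx.le, mul_assoc, ← rpow_add hx, hexp,
    rpow_zero, mul_one]

lemma mul_integral_Ioi_mul_rpow_eq (B : ℝ → ℝ) {s : ℝ} (hs : 0 < s) :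
    s * ∫ t in Ioi 0, B t * t ^ (-(1 + s)) = ∫ x in Ioi 0, B (x ^ (-s⁻¹)) := by
  rw [← integral_comp_rpow_Ioi _ (neg_ne_zero.2 (inv_ne_zero hs.ne')), ← integral_const_mul]
  refine setIntegral_congr_fun measurableSet_Ioi fun x hx => ?_
  rw [smul_eq_mul, mul_left_comm _ (B _), ← mul_assoc, rpow_neg_inv_jacobian hs hx]
  field_simp

lemma tendsto_rpow_neg_inv_atTop {x : ℝ} (hx0 : 0 < x) (hx1 : x < 1) :
    Tendsto (fun s : ℝ => x ^ (-s⁻¹)) (𝓝[>] 0) atTop :=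
  (tendsto_rpow_atBot_of_base_lt_one x hx0 hx1).comp
    (tendsto_neg_atTop_atBot.comp tendsto_inv_nhdsGT_zero)

lemma tendsto_rpow_neg_inv_nhdsGT_zero {x : ℝ} (hx : 1 < x) :
    Tendsto (fun s : ℝ => x ^ (-s⁻¹)) (𝓝[>] 0) (𝓝[>] 0) :=
  tendsto_nhdsWithin_iff.2
    ⟨(tendsto_rpow_atBot_of_base_gt_one x hx).comp
      (tendsto_neg_atTop_atBot.comp tendsto_inv_nhdsGT_zero),
    Eventually.of_forall fun _ => rpow_pos_of_pos (one_pos.trans hx) _⟩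

section

variable {B : ℝ → ℝ} {C : ℝ}

lemma abs_le_mul_min_one (h1 : ∀ t ∈ Ioc (0 : ℝ) 1, |B t| ≤ C * t)
    (h2 : ∀ t : ℝ, 1 ≤ t → |B t| ≤ C) {t : ℝ} (ht : 0 < t) : |B t| ≤ C * min 1 t := by
  rcases le_total t 1 with h | h
  · rw [min_eq_right h]
    exact h1 t ⟨ht, h⟩
  · rw [min_eq_left h, mul_one]
    exact h2 t h

lemma integrableOn_Ioi_comp_rpow (hBm : Measurable B) (hB : ∀ t, 0 < t → |B t| ≤ C * min 1 t)
    {p : ℝ} (hp : p < -1) : IntegrableOn (fun x => B (x ^ p)) (Ioi 0) := by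
  refine ((integrableOn_Ioi_min_one_rpow hp).const_mul C).mono'
    (hBm.comp (measurable_id.pow_const p)).aestronglyMeasurable ?_
  filter_upwards [ae_restrict_mem measurableSet_Ioi] with x hx
  exact hB _ (rpow_pos_of_pos hx p)

lemma integrableOn_Ioi_mul_rpow (hBm : Measurable B) (hB : ∀ t, 0 < t → |B t| ≤ C * min 1 t)
    {s : ℝ} (hs0 : 0 < s) (hs1 : s < 1) :
    IntegrableOn (fun t => B t * t ^ (-(1 + s))) (Ioi 0) := by
  rw [← integrableOn_Ioi_comp_rpow_iff _ (neg_ne_zero.2 (inv_ne_zero hs0.ne'))]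
  have hp : -s⁻¹ < -1 := neg_lt_neg ((one_lt_inv₀ hs0).2 hs1)
  refine IntegrableOn.congr_fun ((integrableOn_Ioi_comp_rpow hBm hB hp).const_mul s⁻¹)
    (fun x hx => ?_) measurableSet_Ioi
  rw [smul_eq_mul]
  linear_combination B (x ^ (-s⁻¹)) * (rpow_neg_inv_jacobian hs0 hx).symm

lemma tendsto_nhdsGT_zero_of_abs_le (hB : ∀ t, 0 < t → |B t| ≤ C * min 1 t) :
    Tendsto B (𝓝[>] 0) (𝓝 0) := by
  have hbound : Tendsto (fun t : ℝ => C * min 1 t) (𝓝[>] 0) (𝓝 0) := by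
    have hcont : Continuous fun t : ℝ => C * min 1 t := by fun_prop
    simpa using (hcont.tendsto 0).mono_left nhdsWithin_le_nhds
  exact squeeze_zero_norm' (eventually_nhdsWithin_of_forall hB) hbound

theorem tendsto_integral_Ioi_comp_rpow_neg_inv {L : ℝ} (hBm : Measurable B)
    (hB : ∀ t, 0 < t → |B t| ≤ C * min 1 t) (hL : Tendsto B atTop (𝓝 L)) :
    Tendsto (fun s : ℝ => ∫ x in Ioi 0, B (x ^ (-s⁻¹))) (𝓝[>] 0) (𝓝 L) := by
  have hC : 0 ≤ C := by simpa using (abs_nonneg _).trans (hB 1 one_pos)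
  have hlimit : ∫ x in Ioi (0 : ℝ), (Iio 1).indicator (fun _ => L) x = L := by
    rw [integral_indicator measurableSet_Iio, Measure.restrict_restrict measurableSet_Iio,
      Iio_inter_Ioi, setIntegral_const]
    simp
  rw [← hlimit]
  refine tendsto_integral_filter_of_dominated_convergence (fun x => C * min 1 (x ^ (-2 : ℝ)))
    (Eventually.of_forall fun _ => (hBm.comp (measurable_id.pow_const _)).aestronglyMeasurable)
    ?_ ((integrableOn_Ioi_min_one_rpow (by norm_num)).const_mul C) ?_
  · filter_upwards [Ioo_mem_nhdsGT (by norm_num : (0 : ℝ) < 2⁻¹)] with s hs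
    filter_upwards [ae_restrict_mem measurableSet_Ioi] with x hx
    have hs2 : -s⁻¹ ≤ -2 := neg_le_neg ((le_inv_comm₀ two_pos hs.1).2 hs.2.le)
    exact (hB _ (rpow_pos_of_pos hx _)).trans
      (mul_le_mul_of_nonneg_left (min_one_rpow_le_min_one_rpow hx hs2 (by norm_num)) hC)
  · filter_upwards [ae_restrict_mem measurableSet_Ioi, ae_restrict_of_ae (volume.ae_ne 1)]
      with x hx0 hx1
    rcases hx1.lt_or_gt with h | h
    · rw [indicator_of_mem (mem_Iio.2 h)]
      exact hL.comp (tendsto_rpow_neg_inv_atTop hx0 h)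
    · rw [indicator_of_notMem (notMem_Iio.2 h.le)]
      exact (tendsto_nhdsGT_zero_of_abs_le hB).comp (tendsto_rpow_neg_inv_nhdsGT_zero h)

end

theorem stmt_9_general (L C : ℝ) (B : ℝ → ℝ) (hB : Measurable B)
    (h1 : ∀ t ∈ Set.Ioc (0 : ℝ) 1, |B t| ≤ C * t)
    (h2 : ∀ t : ℝ, 1 ≤ t → |B t| ≤ C)
    (h3 : Filter.Tendsto B Filter.atTop (nhds L)) :
    (∀ s ∈ Set.Ioo (0 : ℝ) 1,
      IntegrableOn (fun t : ℝ => B t * t ^ (-(1 + s))) (Set.Ioi (0 : ℝ)) volume) ∧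
    Filter.Tendsto
      (fun s : ℝ => s * ∫ t in Set.Ioi (0 : ℝ), B t * t ^ (-(1 + s)))
      (nhdsWithin 0 (Set.Ioo (0 : ℝ) 1)) (nhds L) := by
  have hB' : ∀ t, 0 < t → |B t| ≤ C * min 1 t := fun _ ht => abs_le_mul_min_one h1 h2 ht
  refine ⟨fun s hs => integrableOn_Ioi_mul_rpow hB hB' hs.1 hs.2, ?_⟩
  refine ((tendsto_integral_Ioi_comp_rpow_neg_inv hB hB' h3).congr' ?_).mono_left
    (nhdsWithin_mono _ Ioo_subset_Ioi_self)
  filter_upwards [self_mem_nhdsWithin] with s hs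
  exact (mul_integral_Ioi_mul_rpow_eq B hs).symm

/-- Abelian limit as `s → 0⁺`: if `|B(t)| ≤ C t` for `t ∈ (0,1]`, `|B(t)| ≤ C` for `t ≥ 1`,
and `B(t) → L` as `t → ∞`, then `t ↦ B(t) t^{-(1+s)}` is integrable on `(0,∞)` for each
`s ∈ (0,1)`, and `s ∫₀^∞ B(t) t^{-(1+s)} dt → L` as `s → 0⁺`. -/
theorem stmt_9 (L C : ℝ) (hC : 0 ≤ C) (B : ℝ → ℝ) (hB : Measurable B)
    (h1 : ∀ t ∈ Set.Ioc (0 : ℝ) 1, |B t| ≤ C * t)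
    (h2 : ∀ t : ℝ, 1 ≤ t → |B t| ≤ C)
    (h3 : Filter.Tendsto B Filter.atTop (nhds L)) :
    (∀ s ∈ Set.Ioo (0 : ℝ) 1,
      IntegrableOn (fun t : ℝ => B t * t ^ (-(1 + s))) (Set.Ioi (0 : ℝ)) volume) ∧
    Filter.Tendsto
      (fun s : ℝ => s * ∫ t in Set.Ioi (0 : ℝ), B t * t ^ (-(1 + s)))
      (nhdsWithin 0 (Set.Ioo (0 : ℝ) 1)) (nhds L) :=
  stmt_9_general L C B hB h1 h2 h3
end

section
/- Let s ∈ (0,1), C ≥ 0, and let B : (0,∞) → ℝ be measurable with |B(t)| ≤ C·min(t, 1) for all t > 0. Then for every y > 0 the function t ↦ B(t)·e^{−y²/(4t)}·t^{−(2+s)} is integrable on (0,∞), and y² · ∫₀^∞ B(t) e^{−y²/(4t)} t^{−(2+s)} dt → 0 as y → 0⁺. -/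
/-!
Split `(0, ∞)` at `1` and fix `a ∈ (s, 1)`. On `(1, ∞)` the Gaussian factor is at most `1` and
`|B| ≤ C`, so the integrand is dominated by `C t^{-(2+s)}` uniformly in `y`. On `(0, 1]`,
`|B t| ≤ C t` and `e^{-x} ≤ x^{-a}` give `e^{-y²/(4t)} ≤ 4^a y^{-2a} t^a`, so the integrand is
dominated by `C 4^a y^{-2a} t^{a-1-s}`, integrable because `a > s`. Hence the integral is
`O(y^{-2a} + 1)`, and `y²` times it is `O(y^{2-2a} + y²)`, which tends to `0` because `a < 1`.
-/
open MeasureTheory Real Set Filter Topology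

lemma Real.exp_neg_le_rpow_neg {x a : ℝ} (hx : 0 < x) (ha₀ : 0 ≤ a) (ha₁ : a ≤ 1) :
    exp (-x) ≤ x ^ (-a) := by
  rw [exp_neg, rpow_neg hx.le]
  refine inv_anti₀ (by positivity) ?_
  calc x ^ a ≤ (1 + x) ^ a := rpow_le_rpow hx.le (by linarith) ha₀
    _ ≤ 1 + a * x := rpow_one_add_le_one_add_mul_self (by linarith) ha₀ ha₁
    _ ≤ x + 1 := by nlinarith
    _ ≤ exp x := add_one_le_exp x

lemma exp_neg_sq_div_le_rpow {y t a : ℝ} (hy : 0 < y) (ht : 0 < t) (ha₀ : 0 ≤ a) (ha₁ : a ≤ 1) :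
    exp (-(y ^ 2) / (4 * t)) ≤ 4 ^ a * y ^ (-(2 * a)) * t ^ a := by
  calc exp (-(y ^ 2) / (4 * t)) = exp (-(y ^ 2 / (4 * t))) := by rw [neg_div]
    _ ≤ (y ^ 2 / (4 * t)) ^ (-a) := exp_neg_le_rpow_neg (by positivity) ha₀ ha₁
    _ = 4 ^ a * y ^ (-(2 * a)) * t ^ a := by
      rw [rpow_neg hy.le, rpow_neg (by positivity), ← inv_rpow (by positivity), inv_div,
        div_rpow (by positivity) (by positivity), mul_rpow (by norm_num) ht.le,
        ← rpow_natCast, ← rpow_mul hy.le]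
      push_cast
      ring

lemma exp_neg_sq_div_le_one (y : ℝ) {t : ℝ} (ht : 0 ≤ t) : exp (-(y ^ 2) / (4 * t)) ≤ 1 :=
  exp_le_one_iff.2 (div_nonpos_of_nonpos_of_nonneg (neg_nonpos.2 (sq_nonneg y)) (by positivity))

lemma tendsto_sq_mul_nhdsGT_zero_of_norm_le {F : ℝ → ℝ} {a K L : ℝ} (ha : a < 1)
    (hF : ∀ y, 0 < y → ‖F y‖ ≤ K * y ^ (-(2 * a)) + L) :
    Tendsto (fun y => y ^ 2 * F y) (𝓝[>] 0) (𝓝 0) := by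
  have hlim : Tendsto (fun y : ℝ => K * y ^ (2 - 2 * a) + L * y ^ 2) (𝓝[>] 0) (𝓝 0) := by
    have hcont : ContinuousAt (fun y : ℝ => K * y ^ (2 - 2 * a) + L * y ^ 2) 0 := by
      have := continuousAt_rpow_const 0 (2 - 2 * a) (Or.inr (by linarith))
      fun_prop
    simpa [zero_rpow (by linarith : (2 - 2 * a) ≠ 0)] using
      hcont.tendsto.mono_left nhdsWithin_le_nhds
  refine squeeze_zero_norm' ?_ hlim
  filter_upwards [self_mem_nhdsWithin] with y (hy : 0 < y)
  calc ‖y ^ 2 * F y‖ = y ^ 2 * ‖F y‖ := by rw [norm_mul, norm_pow, norm_eq_abs, sq_abs]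
    _ ≤ y ^ 2 * (K * y ^ (-(2 * a)) + L) := by gcongr; exact hF y hy
    _ = K * y ^ (2 - 2 * a) + L * y ^ 2 := by
      rw [sub_eq_add_neg, rpow_add hy, ← rpow_natCast]; push_cast; ring

noncomputable def heatIntegrand (B : ℝ → ℝ) (s y t : ℝ) : ℝ :=
  B t * exp (-(y ^ 2) / (4 * t)) * t ^ (-(2 + s))

section
variable {B : ℝ → ℝ} {C s : ℝ}

lemma measurable_heatIntegrand (hB : Measurable B) (y : ℝ) :
    Measurable (heatIntegrand B s y) := by
  unfold heatIntegrand; fun_prop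

lemma norm_heatIntegrand {y t : ℝ} (ht : 0 ≤ t) :
    ‖heatIntegrand B s y t‖ = |B t| * exp (-(y ^ 2) / (4 * t)) * t ^ (-(2 + s)) := by
  rw [heatIntegrand, norm_mul, norm_mul, norm_eq_abs, norm_of_nonneg (exp_pos _).le,
    norm_of_nonneg (rpow_nonneg ht _)]

variable (hbd : ∀ t, 0 < t → |B t| ≤ C * min t 1)
include hbd

lemma norm_heatIntegrand_le_of_le_one {a y t : ℝ} (ha₀ : 0 ≤ a) (ha₁ : a ≤ 1) (hy : 0 < y)
    (ht : t ∈ Ioc 0 1) :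
    ‖heatIntegrand B s y t‖ ≤ C * 4 ^ a * y ^ (-(2 * a)) * t ^ (a - 1 - s) := by
  obtain ⟨ht₀, ht₁⟩ := ht
  have hBt : |B t| ≤ C * t := by simpa only [min_eq_left ht₁] using hbd t ht₀
  rw [norm_heatIntegrand ht₀.le]
  calc |B t| * exp (-(y ^ 2) / (4 * t)) * t ^ (-(2 + s))
      ≤ C * t * (4 ^ a * y ^ (-(2 * a)) * t ^ a) * t ^ (-(2 + s)) := by
        gcongr
        · exact (abs_nonneg _).trans hBt
        · exact exp_neg_sq_div_le_rpow hy ht₀ ha₀ ha₁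
    _ = C * 4 ^ a * y ^ (-(2 * a)) * t ^ (a - 1 - s) := by
        rw [show a - 1 - s = 1 + a + -(2 + s) by ring, rpow_add ht₀, rpow_add ht₀, rpow_one]
        ring

lemma norm_heatIntegrand_le_of_one_lt (y : ℝ) {t : ℝ} (ht : 1 < t) :
    ‖heatIntegrand B s y t‖ ≤ C * t ^ (-(2 + s)) := by
  have ht₀ : 0 < t := one_pos.trans ht
  have hBt : |B t| ≤ C := by simpa only [min_eq_right ht.le, mul_one] using hbd t ht₀
  rw [norm_heatIntegrand ht₀.le]
  calc |B t| * exp (-(y ^ 2) / (4 * t)) * t ^ (-(2 + s))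
      ≤ C * 1 * t ^ (-(2 + s)) := by
        gcongr
        · exact (abs_nonneg _).trans hBt
        · exact exp_neg_sq_div_le_one y ht₀.le
    _ = C * t ^ (-(2 + s)) := by ring

variable (hB : Measurable B)
include hB

lemma integrableOn_Ioc_heatIntegrand {a y : ℝ} (ha₀ : 0 ≤ a) (hsa : s < a) (ha₁ : a ≤ 1)
    (hy : 0 < y) : IntegrableOn (heatIntegrand B s y) (Ioc 0 1) := by
  have hpow := integrableOn_Ioc_zero_one_rpow (by linarith : -1 < a - 1 - s)
  refine (hpow.const_mul (C * 4 ^ a * y ^ (-(2 * a)))).mono'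
    (measurable_heatIntegrand hB y).aestronglyMeasurable ?_
  exact (ae_restrict_iff' measurableSet_Ioc).2 <| ae_of_all _ fun t ht =>
    norm_heatIntegrand_le_of_le_one hbd ha₀ ha₁ hy ht

lemma integrableOn_Ioi_one_heatIntegrand (hs : -1 < s) (y : ℝ) :
    IntegrableOn (heatIntegrand B s y) (Ioi 1) := by
  refine ((integrableOn_Ioi_rpow_of_lt (by linarith : -(2 + s) < -1) one_pos).const_mul C).mono'
    (measurable_heatIntegrand hB y).aestronglyMeasurable ?_
  exact (ae_restrict_iff' measurableSet_Ioi).2 <| ae_of_all _ fun t ht =>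
    norm_heatIntegrand_le_of_one_lt hbd y ht

lemma integrableOn_Ioi_zero_heatIntegrand {a y : ℝ} (ha₀ : 0 ≤ a) (hsa : s < a) (ha₁ : a ≤ 1)
    (hs : -1 < s) (hy : 0 < y) : IntegrableOn (heatIntegrand B s y) (Ioi 0) :=
  Ioc_union_Ioi_eq_Ioi (zero_le_one' ℝ) ▸
    (integrableOn_Ioc_heatIntegrand hbd hB ha₀ hsa ha₁ hy).union
      (integrableOn_Ioi_one_heatIntegrand hbd hB hs y)

lemma norm_integral_heatIntegrand_le {a y : ℝ} (ha₀ : 0 ≤ a) (hsa : s < a) (ha₁ : a ≤ 1)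
    (hs : -1 < s) (hy : 0 < y) :
    ‖∫ t in Ioi 0, heatIntegrand B s y t‖ ≤
      (C * 4 ^ a * ∫ t in Ioc 0 1, t ^ (a - 1 - s)) * y ^ (-(2 * a)) +
        C * ∫ t in Ioi 1, t ^ (-(2 + s)) := by
  have h₁ := (integrableOn_Ioc_heatIntegrand hbd hB ha₀ hsa ha₁ hy).norm
  have h₂ := (integrableOn_Ioi_one_heatIntegrand hbd hB hs y).norm
  have hpow := integrableOn_Ioc_zero_one_rpow (by linarith : -1 < a - 1 - s)
  calc ‖∫ t in Ioi 0, heatIntegrand B s y t‖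
      ≤ ∫ t in Ioi 0, ‖heatIntegrand B s y t‖ := norm_integral_le_integral_norm _
    _ = (∫ t in Ioc 0 1, ‖heatIntegrand B s y t‖) + ∫ t in Ioi 1, ‖heatIntegrand B s y t‖ := by
        rw [← Ioc_union_Ioi_eq_Ioi zero_le_one,
          setIntegral_union Ioc_disjoint_Ioi_same measurableSet_Ioi h₁ h₂]
    _ ≤ (∫ t in Ioc 0 1, C * 4 ^ a * y ^ (-(2 * a)) * t ^ (a - 1 - s)) +
          ∫ t in Ioi 1, C * t ^ (-(2 + s)) := by
        gcongr ?_ + ?_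
        · exact setIntegral_mono_on h₁ (hpow.const_mul _) measurableSet_Ioc fun t ht =>
            norm_heatIntegrand_le_of_le_one hbd ha₀ ha₁ hy ht
        · exact setIntegral_mono_on h₂
            ((integrableOn_Ioi_rpow_of_lt (by linarith : -(2 + s) < -1) one_pos).const_mul C)
            measurableSet_Ioi fun t ht => norm_heatIntegrand_le_of_one_lt hbd y ht
    _ = _ := by rw [integral_const_mul, integral_const_mul]; ring

end

theorem stmt_11_general (s C : ℝ) (hs : s ∈ Set.Ioo (0 : ℝ) 1)
    (B : ℝ → ℝ) (hB : Measurable B)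
    (hbd : ∀ t : ℝ, 0 < t → |B t| ≤ C * min t 1) :
    (∀ y : ℝ, 0 < y →
      IntegrableOn (fun t : ℝ => B t * Real.exp (-(y ^ 2) / (4 * t)) * t ^ (-(2 + s)))
        (Set.Ioi (0 : ℝ)) volume) ∧
    Filter.Tendsto
      (fun y : ℝ =>
        y ^ 2 * ∫ t in Set.Ioi (0 : ℝ), B t * Real.exp (-(y ^ 2) / (4 * t)) * t ^ (-(2 + s)))
      (nhdsWithin 0 (Set.Ioi (0 : ℝ))) (nhds 0) := by
  obtain ⟨hs₀, hs₁⟩ := hs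
  obtain ⟨a, ha₀, hsa, ha₁⟩ : ∃ a, 0 ≤ a ∧ s < a ∧ a < 1 :=
    ⟨(1 + s) / 2, by linarith, by linarith, by linarith⟩
  exact ⟨fun y hy => integrableOn_Ioi_zero_heatIntegrand hbd hB ha₀ hsa ha₁.le (by linarith) hy,
    tendsto_sq_mul_nhdsGT_zero_of_norm_le ha₁ fun y hy =>
      norm_integral_heatIntegrand_le hbd hB ha₀ hsa ha₁.le (by linarith) hy⟩

/-- If `|B(t)| ≤ C min(t,1)`, then `B(t) e^{-y²/(4t)} t^{-(2+s)}` is integrable on `(0,∞)`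
for every `y > 0`, and `y² ∫₀^∞ B(t) e^{-y²/(4t)} t^{-(2+s)} dt → 0` as `y → 0⁺`. -/
theorem stmt_11 (s C : ℝ) (hs : s ∈ Set.Ioo (0 : ℝ) 1) (hC : 0 ≤ C)
    (B : ℝ → ℝ) (hB : Measurable B)
    (hbd : ∀ t : ℝ, 0 < t → |B t| ≤ C * min t 1) :
    (∀ y : ℝ, 0 < y →
      IntegrableOn (fun t : ℝ => B t * Real.exp (-(y ^ 2) / (4 * t)) * t ^ (-(2 + s)))
        (Set.Ioi (0 : ℝ)) volume) ∧
    Filter.Tendsto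
      (fun y : ℝ =>
        y ^ 2 * ∫ t in Set.Ioi (0 : ℝ), B t * Real.exp (-(y ^ 2) / (4 * t)) * t ^ (-(2 + s)))
      (nhdsWithin 0 (Set.Ioi (0 : ℝ))) (nhds 0) :=
  stmt_11_general s C hs B hB hbd
end

section
/- Let (X, μ) be a measure space with μ finite and 0 < μ(X) < ∞, let q ≥ 2 be real, and let u : X → ℝ be in L^q(μ). Set ū = (1/μ(X)) ∫_X u dμ. Then (∫_X |u|^q dμ)^{2/q} ≤ μ(X)^{−2(q−1)/q} · (∫_X u dμ)² + (q − 1) · (∫_X |u − ū|^q dμ)^{2/q}. (Bakry-type convexity inequality used to identify the optimal lower-order constant in the p-power fractional Sobolev inequality in the case p_s^* ≥ 2.) -/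
open MeasureTheory Real Set Filter

/-!
Write `c = ū`, `v = u - ū` (so `∫ v = 0`), `ω t = ∫ |c + t v| ^ q` and `φ = ω ^ (2 / q)`.
Differentiating under the integral sign, `ω' = q ρ` and `ρ' = (q - 1) σ`, where
`ρ t = ∫ |c + t v| ^ (q - 2) (c + t v) v` and `σ t = ∫ |c + t v| ^ (q - 2) v²`, hence
`φ'' = 2 (q - 1) ω ^ (2/q - 1) σ + 2 q (2/q - 1) ω ^ (2/q - 2) ρ²`.
The second term is nonpositive as `q ≥ 2`, and Hölder with exponents `q / (q - 2)` and `q / 2`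
gives `σ ≤ ω ^ ((q - 2)/q) ‖v‖_q²`, so `φ'' ≤ 2 (q - 1) ‖v‖_q²`.
Since `ρ 0 = |c| ^ (q-2) c ∫ v = 0`, Taylor's formula yields `φ 1 ≤ φ 0 + (q - 1) ‖v‖_q²`,
which is the claim. Differentiating `ω ^ (2 / q)` needs `ω t > 0`, which holds because
`∫ (c + t v) = μ(X) c ≠ 0`; the case `ū = 0` is immediate.
-/

lemma hasDerivAt_abs_rpow_sub_two_mul {q : ℝ} (hq : 2 ≤ q) (x : ℝ) :
    HasDerivAt (fun y : ℝ => |y| ^ (q - 2) * y) ((q - 1) * |x| ^ (q - 2)) x := by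
  have hpow : Continuous fun y : ℝ => |y| ^ (q - 2) :=
    continuous_abs.rpow_const fun _ => Or.inr (by linarith)
  refine hasDerivAt_of_hasDerivAt_of_ne' (x := 0) (fun y hy => ?_)
    (hpow.mul continuous_id).continuousAt (hpow.const_mul _).continuousAt x
  have hy' : |y| ≠ 0 := abs_ne_zero.2 hy
  refine (((hasDerivAt_abs hy).rpow_const (p := q - 2) (Or.inl hy')).mul
    (hasDerivAt_id y)).congr_deriv ?_
  rw [rpow_sub_one hy', id_eq]
  calc _ = (q - 2) * |y| ^ (q - 2) / |y| * (SignType.sign y * y) + |y| ^ (q - 2) := by ring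
    _ = _ := by rw [sign_mul_self]; field_simp; ring

lemma abs_abs_rpow_sub_two_mul {q : ℝ} (hq : 2 ≤ q) (y : ℝ) :
    |(|y| ^ (q - 2) * y)| = |y| ^ (q - 1) := by
  rw [abs_mul, abs_of_nonneg (by positivity), ← rpow_add_one' (abs_nonneg y) (by linarith)]
  ring_nf

lemma abs_rpow_sub_mul_abs_pow_le {y z h p : ℝ} {k : ℕ} (hy : |y| ≤ h) (hz : |z| ≤ h)
    (hk : k ≤ p) (hp : 0 < p) : |y| ^ (p - k) * |z| ^ k ≤ h ^ p := by
  have h0 : 0 ≤ h := (abs_nonneg y).trans hy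
  calc |y| ^ (p - k) * |z| ^ k ≤ h ^ (p - k) * h ^ k := by
        gcongr
    _ = h ^ p := by rw [← rpow_add_natCast' h0 (by simpa using hp.ne'), sub_add_cancel]

lemma abs_add_mul_le_and_abs_le_of_dist_lt {a b t t₀ : ℝ} (ht : dist t t₀ < 1) :
    |a + t * b| ≤ |a| + (|t₀| + 1) * |b| ∧ |b| ≤ |a| + (|t₀| + 1) * |b| := by
  have ht : |t| ≤ |t₀| + 1 := by
    have := abs_sub_abs_le_abs_sub t t₀
    rw [Real.dist_eq] at ht
    linarith
  constructor
  · calc |a + t * b| ≤ |a| + |t| * |b| := (abs_add_le _ _).trans_eq (by rw [abs_mul])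
      _ ≤ |a| + (|t₀| + 1) * |b| := by gcongr
  · nlinarith [abs_nonneg a, abs_nonneg b, abs_nonneg t₀]

lemma image_one_le_of_hasDerivAt_of_le {φ φ' φ'' : ℝ → ℝ} {M : ℝ}
    (hφ : ∀ t, HasDerivAt φ (φ' t) t) (hφ' : ∀ t, HasDerivAt φ' (φ'' t) t)
    (hM : ∀ t, φ'' t ≤ M) : φ 1 ≤ φ 0 + φ' 0 + M / 2 := by
  have hslope : Antitone fun t => φ' t - M * t :=
    antitone_of_hasDerivAt_nonpos (fun t => (hφ' t).sub ((hasDerivAt_id t).const_mul M))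
      fun t => by simpa using hM t
  have hφc : Continuous φ := continuous_iff_continuousAt.2 fun t => (hφ t).continuousAt
  have hk : AntitoneOn (fun t => φ t - φ' 0 * t - M / 2 * t ^ 2) (Ici 0) := by
    refine antitoneOn_of_hasDerivWithinAt_nonpos (convex_Ici 0) (by fun_prop) (fun t _ =>
      (((hφ t).sub ((hasDerivAt_id t).const_mul (φ' 0))).sub
        ((hasDerivAt_pow 2 t).const_mul (M / 2))).hasDerivWithinAt) fun t ht => ?_
    rw [interior_Ici] at ht
    have := hslope ht.le
    simp only at this ⊢
    linarith
  have := hk self_mem_Ici (by norm_num : (1:ℝ) ∈ Ici 0) zero_le_one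
  simp only at this
  linarith

section

variable {X : Type*} [MeasurableSpace X] {μ : Measure X} {q : ℝ}

lemma MeasureTheory.MemLp.integrable_abs_rpow {f : X → ℝ} (hf : MemLp f (ENNReal.ofReal q) μ)
    (hq : 0 < q) : Integrable (fun x => |f x| ^ q) μ := by
  simpa [ENNReal.toReal_ofReal hq.le] using
    hf.integrable_norm_rpow (by simpa using hq) ENNReal.ofReal_ne_top

lemma MeasureTheory.MemLp.abs_rpow {f : X → ℝ} (hf : MemLp f (ENNReal.ofReal q) μ) {r : ℝ}
    (hr : 0 < r) : MemLp (fun x => |f x| ^ r) (ENNReal.ofReal (q / r)) μ := by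
  simpa [ENNReal.toReal_ofReal hr.le, ENNReal.ofReal_div_of_pos hr] using
    hf.norm_rpow_div (ENNReal.ofReal r)

lemma hasDerivAt_integral_comp_add_mul_mul_pow {f g : X → ℝ} {Φ Φ' : ℝ → ℝ} {C : ℝ} {n : ℕ}
    (hn : n + 1 ≤ q) (hf : MemLp f (ENNReal.ofReal q) μ) (hg : MemLp g (ENNReal.ofReal q) μ)
    (hΦ : ∀ y, HasDerivAt Φ (Φ' y) y) (hΦ' : Continuous Φ')
    (hΦ_le : ∀ y, |Φ y| ≤ C * |y| ^ (q - n)) (hΦ'_le : ∀ y, |Φ' y| ≤ C * |y| ^ (q - (n + 1)))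
    (t₀ : ℝ) :
    HasDerivAt (fun t => ∫ x, Φ (f x + t * g x) * g x ^ n ∂μ)
      (∫ x, Φ' (f x + t₀ * g x) * g x ^ (n + 1) ∂μ) t₀ := by
  have hq : 0 < q := by linarith [n.cast_nonneg (α := ℝ)]
  have hC : 0 ≤ C := by simpa using (abs_nonneg _).trans (hΦ_le 1)
  have hΦc : Continuous Φ := continuous_iff_continuousAt.2 fun y => (hΦ y).continuousAt
  set K := |t₀| + 1
  set h : X → ℝ := fun x => |f x| + K * |g x|
  have hh : Integrable (fun x => C * h x ^ q) μ := by
    have hhq : MemLp h (ENNReal.ofReal q) μ := hf.abs.add (hg.abs.const_mul K)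
    refine ((hhq.integrable_abs_rpow hq).const_mul C).congr (ae_of_all _ fun x => ?_)
    simp only [h, abs_of_nonneg (by positivity : 0 ≤ |f x| + K * |g x|)]
  have hdom : ∀ x, ∀ t ∈ Metric.ball t₀ 1, |f x + t * g x| ≤ h x ∧ |g x| ≤ h x :=
    fun x t ht => abs_add_mul_le_and_abs_le_of_dist_lt ht
  have hmeas : ∀ t, AEStronglyMeasurable (fun x => Φ (f x + t * g x) * g x ^ n) μ := fun t =>
    (hΦc.comp_aestronglyMeasurable (hf.1.add (hg.1.const_mul t))).mul (hg.1.pow n)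
  refine (hasDerivAt_integral_of_dominated_loc_of_deriv_le (bound := fun x => C * h x ^ q)
    (F' := fun t x => Φ' (f x + t * g x) * g x ^ (n + 1))
    (Metric.ball_mem_nhds t₀ one_pos) (Eventually.of_forall hmeas) ?_ ?_ ?_ hh ?_).2
  · refine hh.mono' (hmeas t₀) (ae_of_all _ fun x => ?_)
    obtain ⟨h1, h2⟩ := hdom x t₀ (Metric.mem_ball_self one_pos)
    calc ‖Φ (f x + t₀ * g x) * g x ^ n‖ ≤ C * |f x + t₀ * g x| ^ (q - n) * |g x| ^ n := by
          rw [norm_mul, norm_pow, norm_eq_abs, norm_eq_abs]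
          gcongr
          exact hΦ_le _
      _ ≤ C * h x ^ q := by
          rw [mul_assoc]
          gcongr
          exact abs_rpow_sub_mul_abs_pow_le h1 h2 (by linarith) hq
  · exact (hΦ'.comp_aestronglyMeasurable (hf.1.add (hg.1.const_mul t₀))).mul
      (hg.1.pow (n + 1))
  · refine ae_of_all _ fun x t ht => ?_
    obtain ⟨h1, h2⟩ := hdom x t ht
    calc ‖Φ' (f x + t * g x) * g x ^ (n + 1)‖
        ≤ C * |f x + t * g x| ^ (q - ↑(n + 1)) * |g x| ^ (n + 1) := by
          rw [norm_mul, norm_pow, norm_eq_abs, norm_eq_abs]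
          gcongr
          exact_mod_cast hΦ'_le _
      _ ≤ C * h x ^ q := by
          rw [mul_assoc]
          gcongr
          exact abs_rpow_sub_mul_abs_pow_le h1 h2 (by push_cast; linarith) hq
  · refine ae_of_all _ fun x t _ => ?_
    refine ((((hΦ _).comp t ((hasDerivAt_mul_const (g x)).const_add (f x))).mul_const
      (g x ^ n))).congr_deriv ?_
    ring

lemma integral_abs_rpow_sub_two_mul_sq_le {w g : X → ℝ} (hq : 2 ≤ q)
    (hw : MemLp w (ENNReal.ofReal q) μ) (hg : MemLp g (ENNReal.ofReal q) μ) :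
    ∫ x, |w x| ^ (q - 2) * g x ^ 2 ∂μ ≤
      (∫ x, |w x| ^ q ∂μ) ^ ((q - 2) / q) * (∫ x, |g x| ^ q ∂μ) ^ (2 / q) := by
  rcases hq.eq_or_lt with rfl | hq
  · simp [sq_abs]
  have hpq : (q / (q - 2)).HolderConjugate (q / 2) := by
    rw [Real.holderConjugate_iff]
    constructor
    · rw [one_lt_div (by linarith)]
      linarith
    · field_simp
      ring
  have key := integral_mul_le_Lp_mul_Lq_of_nonneg hpq (ae_of_all _ fun x => by positivity)
    (ae_of_all _ fun x => by positivity) (hw.abs_rpow (by linarith)) (hg.abs_rpow two_pos)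
  have e₁ : (q - 2) * (q / (q - 2)) = q := by field_simp
  have e₂ : 2 * (q / 2) = q := by field_simp
  simp only [← rpow_mul (abs_nonneg _), e₁, e₂, one_div_div] at key
  simpa only [rpow_two, sq_abs] using key

lemma integral_abs_rpow_pos_of_integral_ne_zero {w : X → ℝ} (hq : 0 < q)
    (hw : Integrable (fun x => |w x| ^ q) μ) (h : ∫ x, w x ∂μ ≠ 0) :
    0 < ∫ x, |w x| ^ q ∂μ := by
  refine (integral_nonneg fun x => by positivity).lt_of_ne fun h0 => h ?_
  rw [eq_comm, integral_eq_zero_iff_of_nonneg (fun x => by positivity) hw] at h0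
  refine integral_eq_zero_of_ae ?_
  filter_upwards [h0] with x hx
  simpa [hq.ne'] using hx

theorem integral_abs_add_rpow_rpow_le {f g : X → ℝ} (hq : 2 ≤ q)
    (hf : MemLp f (ENNReal.ofReal q) μ) (hg : MemLp g (ENNReal.ofReal q) μ)
    (hpos : ∀ t : ℝ, 0 < ∫ x, |f x + t * g x| ^ q ∂μ) :
    (∫ x, |f x + g x| ^ q ∂μ) ^ (2 / q) ≤
      (∫ x, |f x| ^ q ∂μ) ^ (2 / q) +
        2 * (∫ x, |f x| ^ q ∂μ) ^ (2 / q - 1) * ∫ x, |f x| ^ (q - 2) * f x * g x ∂μ +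
        (q - 1) * (∫ x, |g x| ^ q ∂μ) ^ (2 / q) := by
  have hq0 : 0 < q := by linarith
  set ω : ℝ → ℝ := fun t => ∫ x, |f x + t * g x| ^ q ∂μ
  set ρ : ℝ → ℝ := fun t => ∫ x, |f x + t * g x| ^ (q - 2) * (f x + t * g x) * g x ∂μ
  set σ : ℝ → ℝ := fun t => ∫ x, |f x + t * g x| ^ (q - 2) * g x ^ 2 ∂μ
  set N := (∫ x, |g x| ^ q ∂μ) ^ (2 / q)
  have hpow : Continuous fun y : ℝ => |y| ^ (q - 2) :=
    continuous_abs.rpow_const fun _ => Or.inr (by linarith)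
  have hω : ∀ t, HasDerivAt ω (q * ρ t) t := fun t => by
    have := hasDerivAt_integral_comp_add_mul_mul_pow (μ := μ) (n := 0) (C := q)
      (by simp; linarith) hf hg (fun y => hasDerivAt_abs_rpow y (by linarith : 1 < q))
      ((hpow.const_mul q).mul continuous_id)
      (fun y => by
        rw [Nat.cast_zero, sub_zero, abs_of_nonneg (by positivity)]
        exact le_mul_of_one_le_left (by positivity) (by linarith))
      (fun y => by
        rw [mul_assoc, abs_mul, abs_of_pos hq0, abs_abs_rpow_sub_two_mul hq]
        norm_num) t
    simp only [pow_zero, mul_one, zero_add, pow_one] at this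
    convert this using 1
    rw [← integral_const_mul]
    congr 1 with x
    ring
  have hρ : ∀ t, HasDerivAt ρ ((q - 1) * σ t) t := fun t => by
    have := hasDerivAt_integral_comp_add_mul_mul_pow (μ := μ) (n := 1) (C := q)
      (by norm_num; linarith) hf hg (hasDerivAt_abs_rpow_sub_two_mul hq)
      (hpow.const_mul _)
      (fun y => by
        rw [abs_abs_rpow_sub_two_mul hq]
        norm_num
        exact le_mul_of_one_le_left (by positivity) (by linarith))
      (fun y => by
        rw [abs_mul, abs_of_pos (by linarith : 0 < q - 1), abs_of_nonneg (by positivity)]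
        norm_num
        exact mul_le_mul_of_nonneg_right (by linarith) (by positivity)) t
    simp only [pow_one] at this
    convert this using 1
    rw [← integral_const_mul]
    congr 1 with x
    ring
  have hσ : ∀ t, σ t ≤ ω t ^ ((q - 2) / q) * N := fun t =>
    integral_abs_rpow_sub_two_mul_sq_le hq (hf.add (hg.const_mul t)) hg
  have hφ : ∀ t, HasDerivAt (fun s => ω s ^ (2 / q)) (2 * ρ t * ω t ^ (2 / q - 1)) t :=
    fun t => ((hω t).rpow_const (Or.inl (hpos t).ne')).congr_deriv (by field_simp)
  have hφ' : ∀ t, HasDerivAt (fun s => 2 * ρ s * ω s ^ (2 / q - 1))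
      (2 * ((q - 1) * σ t) * ω t ^ (2 / q - 1) +
        2 * ρ t * (q * ρ t * (2 / q - 1) * ω t ^ (2 / q - 1 - 1))) t := fun t =>
    ((hρ t).const_mul 2).mul ((hω t).rpow_const (Or.inl (hpos t).ne'))
  have hM : ∀ t, 2 * ((q - 1) * σ t) * ω t ^ (2 / q - 1) +
      2 * ρ t * (q * ρ t * (2 / q - 1) * ω t ^ (2 / q - 1 - 1)) ≤ 2 * (q - 1) * N := by
    intro t
    have hexp : 2 / q - 1 ≤ 0 := by rw [sub_nonpos, div_le_one hq0]; linarith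
    have h₁ : σ t * ω t ^ (2 / q - 1) ≤ N :=
      calc σ t * ω t ^ (2 / q - 1) ≤ ω t ^ ((q - 2) / q) * N * ω t ^ (2 / q - 1) := by
            gcongr
            exact hσ t
        _ = N := by
            rw [mul_right_comm, ← rpow_add (hpos t),
              show (q - 2) / q + (2 / q - 1) = 0 by field_simp; ring, rpow_zero, one_mul]
    have h₂ : 2 * ρ t * (q * ρ t * (2 / q - 1) * ω t ^ (2 / q - 1 - 1)) ≤ 0 :=
      calc _ = 2 * q * ρ t ^ 2 * ω t ^ (2 / q - 1 - 1) * (2 / q - 1) := by ring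
        _ ≤ 0 := mul_nonpos_of_nonneg_of_nonpos (by positivity) hexp
    have := mul_le_mul_of_nonneg_left h₁ (by linarith : 0 ≤ 2 * (q - 1))
    linarith
  have := image_one_le_of_hasDerivAt_of_le hφ hφ' hM
  simp only [ω, ρ, N, zero_mul, add_zero, one_mul] at this
  linear_combination this

theorem integral_abs_const_add_rpow_rpow_le [IsFiniteMeasure μ] [NeZero μ] (hq : 2 ≤ q)
    {c : ℝ} (hc : c ≠ 0) {v : X → ℝ} (hv : MemLp v (ENNReal.ofReal q) μ)
    (hv₀ : ∫ x, v x ∂μ = 0) :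
    (∫ x, |c + v x| ^ q ∂μ) ^ (2 / q) ≤
      μ.real univ ^ (2 / q) * c ^ 2 + (q - 1) * (∫ x, |v x| ^ q ∂μ) ^ (2 / q) := by
  have hq0 : 0 < q := by linarith
  have hvi : Integrable v μ := hv.integrable (by simpa using (by linarith : 1 ≤ q))
  have hpos : ∀ t : ℝ, 0 < ∫ x, |c + t * v x| ^ q ∂μ := fun t =>
    integral_abs_rpow_pos_of_integral_ne_zero hq0
      (((memLp_const c).add (hv.const_mul t)).integrable_abs_rpow hq0) (by
        rw [integral_add (integrable_const c) (hvi.const_mul t), integral_const_mul, hv₀]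
        simp [measureReal_univ_ne_zero, hc])
  have key := integral_abs_add_rpow_rpow_le hq (memLp_const c) hv hpos
  have hρ₀ : ∫ x, |c| ^ (q - 2) * c * v x ∂μ = 0 := by rw [integral_const_mul, hv₀, mul_zero]
  have hω₀ : (∫ _ : X, |c| ^ q ∂μ) ^ (2 / q) = μ.real univ ^ (2 / q) * c ^ 2 := by
    rw [integral_const, smul_eq_mul, mul_rpow measureReal_nonneg (by positivity),
      ← rpow_mul (abs_nonneg c), mul_div_cancel₀ _ hq0.ne', rpow_two, sq_abs]
  rwa [hρ₀, mul_zero, add_zero, hω₀] at key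

end

/-- Bakry-type convexity inequality: for a finite measure `μ` with `0 < μ(X)`, `q ≥ 2`, and
`u ∈ L^q(μ)`, with `ū` the mean of `u`,
`(∫ |u|^q)^{2/q} ≤ μ(X)^{-2(q-1)/q} (∫ u)² + (q-1) (∫ |u - ū|^q)^{2/q}`. -/
theorem stmt_12 {X : Type*} [MeasurableSpace X] (μ : Measure X) [IsFiniteMeasure μ]
    (hpos : 0 < μ Set.univ) (q : ℝ) (hq : 2 ≤ q)
    (u : X → ℝ) (hu : MemLp u (ENNReal.ofReal q) μ) :
    (∫ x, |u x| ^ q ∂μ) ^ (2 / q) ≤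
      (μ Set.univ).toReal ^ (-(2 * (q - 1) / q)) * (∫ x, u x ∂μ) ^ 2 +
        (q - 1) *
          (∫ x, |u x - (μ Set.univ).toReal⁻¹ * ∫ y, u y ∂μ| ^ q ∂μ) ^ (2 / q) := by
  have : NeZero μ := ⟨by rintro rfl; simp at hpos⟩
  have hm : 0 < μ.real univ := measureReal_univ_pos
  rw [← measureReal_def]
  set c := (μ.real univ)⁻¹ * ∫ y, u y ∂μ
  have hu₁ : ∫ x, u x ∂μ = μ.real univ * c := (mul_inv_cancel_left₀ hm.ne' _).symm
  clear_value c
  by_cases hc : c = 0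
  · rw [hu₁, hc]
    simp only [sub_zero, mul_zero, ne_eq, OfNat.ofNat_ne_zero, not_false_eq_true, zero_pow,
      zero_add]
    exact le_mul_of_one_le_left (by positivity) (by linarith)
  · have hv₀ : ∫ x, (u x - c) ∂μ = 0 := by
      rw [integral_sub (hu.integrable (by simpa using (by linarith : 1 ≤ q)))
        (integrable_const c)]
      simp [hu₁]
    have key := integral_abs_const_add_rpow_rpow_le (v := fun x => u x - c) hq hc
      (hu.sub (memLp_const c)) hv₀
    have hμ : μ.real univ ^ (2 / q) * c ^ 2 =
        μ.real univ ^ (-(2 * (q - 1) / q)) * (∫ x, u x ∂μ) ^ 2 := by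
      rw [hu₁, mul_pow, ← mul_assoc]
      congr 1
      rw [← rpow_two, ← rpow_add hm]
      congr 1
      field_simp
      ring
    simpa only [add_sub_cancel, hμ] using key
end

section
/- Let q ∈ (1,2]. Then for every x ≥ 0, (1 + x)^q ≤ 1 + q·x + x^q. -/
/-!
The gap `f t = 1 + q t + t^q - (1 + t)^q` vanishes at `t = 0`, and its derivative
`q (1 + t^(q-1) - (1 + t)^(q-1))` is nonnegative for `t ≥ 0` because `s ↦ s^(q-1)` is subadditive
on `[0, ∞)` when `0 ≤ q - 1 ≤ 1`. Hence `f` is nonnegative on `[0, ∞)`.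
-/

open Real Set

lemma hasDerivAt_one_add_mul_add_rpow_sub_one_add_rpow {q : ℝ} (hq : 1 ≤ q) (t : ℝ) :
    HasDerivAt (fun t => 1 + q * t + t ^ q - (1 + t) ^ q)
      (q * (1 + t ^ (q - 1) - (1 + t) ^ (q - 1))) t := by
  have hlin : HasDerivAt (fun t : ℝ => 1 + q * t) q t := by
    simpa using ((hasDerivAt_id t).const_mul q).const_add 1
  have hpow : HasDerivAt (fun t : ℝ => t ^ q) (q * t ^ (q - 1)) t :=
    hasDerivAt_rpow_const (Or.inr hq)
  have hshift : HasDerivAt (fun t : ℝ => (1 + t) ^ q) (1 * q * (1 + t) ^ (q - 1)) t :=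
    ((hasDerivAt_id t).const_add 1).rpow_const (Or.inr hq)
  exact ((hlin.add hpow).sub hshift).congr_deriv (by ring)

lemma monotoneOn_one_add_mul_add_rpow_sub_one_add_rpow {q : ℝ} (hq1 : 1 ≤ q) (hq2 : q ≤ 2) :
    MonotoneOn (fun t => 1 + q * t + t ^ q - (1 + t) ^ q) (Ici 0) := by
  have hderiv := hasDerivAt_one_add_mul_add_rpow_sub_one_add_rpow hq1
  have hdiff : Differentiable ℝ (fun t => 1 + q * t + t ^ q - (1 + t) ^ q) :=
    fun t => (hderiv t).differentiableAt
  refine monotoneOn_of_deriv_nonneg (convex_Ici 0) hdiff.continuous.continuousOn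
    (hdiff.differentiableOn.mono interior_subset) fun t ht => ?_
  rw [interior_Ici] at ht
  rw [(hderiv t).deriv]
  have hsubadd : (1 + t) ^ (q - 1) ≤ 1 + t ^ (q - 1) := by
    simpa using rpow_add_le_add_rpow zero_le_one (le_of_lt ht) (p := q - 1)
      (by linarith) (by linarith)
  exact mul_nonneg (by linarith) (by linarith)

theorem one_add_rpow_le_one_add_mul_add_rpow {q x : ℝ} (hq1 : 1 ≤ q) (hq2 : q ≤ 2)
    (hx : 0 ≤ x) : (1 + x) ^ q ≤ 1 + q * x + x ^ q := by
  have hmono := monotoneOn_one_add_mul_add_rpow_sub_one_add_rpow hq1 hq2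
    self_mem_Ici (mem_Ici.mpr hx) hx
  simp only [zero_rpow (by linarith : q ≠ 0), one_rpow, add_zero, mul_zero] at hmono
  linarith

/-- For `q ∈ (1,2]` and `x ≥ 0`, `(1+x)^q ≤ 1 + q x + x^q`. -/
theorem stmt_15 (q : ℝ) (hq : q ∈ Set.Ioc (1 : ℝ) 2) (x : ℝ) (hx : 0 ≤ x) :
    (1 + x) ^ q ≤ 1 + q * x + x ^ q :=
  one_add_rpow_le_one_add_mul_add_rpow hq.1.le hq.2 hx
end

section
/- Let q ∈ (1,2]. Then for every x ∈ [0,1], (1 − x)^q ≤ 1 − q·x + x^q. -/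
open Real

/-!
The gap `f t = 1 - q t + t ^ q - (1 - t) ^ q` vanishes at `t = 0` and has derivative
`q (t ^ (q - 1) + (1 - t) ^ (q - 1) - 1)`. For `q ≤ 2` the exponent `q - 1` lies in `[0, 1]`,
where `a ↦ a ^ (q - 1)` is subadditive, so `1 = (t + (1 - t)) ^ (q - 1)` bounds the bracket
from below by `0`. Hence `f` is monotone on `[0, 1]` and nonnegative there.
-/

lemma one_le_rpow_add_one_sub_rpow {p t : ℝ} (hp₀ : 0 ≤ p) (hp₁ : p ≤ 1) (ht₀ : 0 ≤ t)
    (ht₁ : t ≤ 1) : 1 ≤ t ^ p + (1 - t) ^ p :=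
  calc (1 : ℝ) = (t + (1 - t)) ^ p := by rw [add_sub_cancel, one_rpow]
    _ ≤ t ^ p + (1 - t) ^ p := rpow_add_le_add_rpow ht₀ (by linarith) hp₀ hp₁

lemma hasDerivAt_one_sub_mul_add_rpow_sub_one_sub_rpow {q : ℝ} (hq : 1 ≤ q) (t : ℝ) :
    HasDerivAt (fun t => 1 - q * t + t ^ q - (1 - t) ^ q)
      (q * (t ^ (q - 1) + (1 - t) ^ (q - 1) - 1)) t := by
  have hlin : HasDerivAt (fun t : ℝ => 1 - q * t) (-q) t := by
    simpa using ((hasDerivAt_id t).const_mul q).const_sub 1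
  have hpow : HasDerivAt (fun t : ℝ => t ^ q) (q * t ^ (q - 1)) t :=
    hasDerivAt_rpow_const (Or.inr hq)
  have hpow_sub : HasDerivAt (fun t : ℝ => (1 - t) ^ q) (q * (1 - t) ^ (q - 1) * -1) t :=
    (hasDerivAt_rpow_const (Or.inr hq)).comp t ((hasDerivAt_id t).const_sub 1)
  exact ((hlin.add hpow).sub hpow_sub).congr_deriv (by ring)

lemma monotoneOn_one_sub_mul_add_rpow_sub_one_sub_rpow {q : ℝ} (hq₁ : 1 ≤ q) (hq₂ : q ≤ 2) :
    MonotoneOn (fun t => 1 - q * t + t ^ q - (1 - t) ^ q) (Set.Icc 0 1) := by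
  have hderiv := hasDerivAt_one_sub_mul_add_rpow_sub_one_sub_rpow hq₁
  refine monotoneOn_of_hasDerivWithinAt_nonneg (convex_Icc 0 1)
    (fun t _ => (hderiv t).continuousAt.continuousWithinAt)
    (fun t _ => (hderiv t).hasDerivWithinAt) fun t ht => ?_
  rw [interior_Icc] at ht
  have hsum := one_le_rpow_add_one_sub_rpow (p := q - 1) (by linarith) (by linarith) ht.1.le ht.2.le
  exact mul_nonneg (by linarith) (by linarith)

/-- For `q ∈ (1,2]` and `x ∈ [0,1]`, `(1-x)^q ≤ 1 - q x + x^q`. -/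
theorem stmt_16 (q : ℝ) (hq : q ∈ Set.Ioc (1 : ℝ) 2) (x : ℝ) (hx : x ∈ Set.Icc (0 : ℝ) 1) :
    (1 - x) ^ q ≤ 1 - q * x + x ^ q := by
  have hmono := monotoneOn_one_sub_mul_add_rpow_sub_one_sub_rpow hq.1.le hq.2
  have h := hmono (Set.left_mem_Icc.2 zero_le_one) hx hx.1
  simp only [mul_zero, sub_zero, zero_rpow (by linarith [hq.1] : q ≠ 0), add_zero,
    one_rpow, sub_self] at h
  linarith
end
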